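/- For any matrix M̂ ∈ X that is a local minimum of the pull-back Fréchet function f_n(Ẑ) = (1/n) ∑_{i=1}^n min_{X̂ ∈ X_i} ‖X̂ − Ẑ‖², there exist representations X̂_i ∈ X_i in optimal position with M̂ (i.e., achieving the minimum ‖X̂_i − M̂‖ = δ(X_i, M)) such that M̂ = (1/n) ∑_{i=1}^n X̂_i. (Mean Partition Theorem) -/

import Mathlib

open Finset

noncomputable section

def LP (l m : ℕ) : Set (Matrix (Fin l) (Fin m) ℝ) :=
  {X | (∀ k j, X k j ∈ Set.Icc (0:ℝ) 1) ∧ ∀ j, ∑ k, X k j = 1}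

def act {l m : ℕ} (σ : Equiv.Perm (Fin l)) (X : Matrix (Fin l) (Fin m) ℝ) :
    Matrix (Fin l) (Fin m) ℝ :=
  fun k j => X (σ⁻¹ k) j

def orbit {l m : ℕ} (X : Matrix (Fin l) (Fin m) ℝ) : Set (Matrix (Fin l) (Fin m) ℝ) :=
  {Y | ∃ σ : Equiv.Perm (Fin l), act σ X = Y}

def finner {l m : ℕ} (A B : Matrix (Fin l) (Fin m) ℝ) : ℝ :=
  ∑ k, ∑ j, A k j * B k j

def fnorm {l m : ℕ} (A : Matrix (Fin l) (Fin m) ℝ) : ℝ :=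
  Real.sqrt (finner A A)

def pdist {l m : ℕ} (A B : Set (Matrix (Fin l) (Fin m) ℝ)) : ℝ :=
  sInf {d | ∃ X ∈ A, ∃ Y ∈ B, d = fnorm (X - Y)}

/-!
Put every `X i` in optimal position `A i` with respect to `M`. Then the Fréchet function is
bounded above by `g Z = (1/n) ∑ ‖A i - Z‖²`, with equality at `M`, so `M` is also a local minimum
of `g` on the convex set `LP l m`. The parallel axis identity `g Z = g Ā + ‖Ā - Z‖²`, with `Ā` the
mean of the `A i` (which lies in `LP l m`), turns this into a local minimum of the convex function
`Z ↦ ‖Ā - Z‖` on a convex set; it is therefore global, and comparing with `Z = Ā` gives `M = Ā`.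
-/

section Centroid

variable {ι E : Type*} [Fintype ι] [NormedAddCommGroup E] [InnerProductSpace ℝ E]

theorem sum_sub_smul_sum_eq_zero (a : ι → E) :
    ∑ i, (a i - (Fintype.card ι : ℝ)⁻¹ • ∑ j, a j) = 0 := by
  rcases isEmpty_or_nonempty ι with _ | _
  · simp
  · rw [sum_sub_distrib, sum_const, card_univ, ← Nat.cast_smul_eq_nsmul ℝ, smul_inv_smul₀
      (by exact_mod_cast Fintype.card_ne_zero), sub_self]

theorem sum_norm_sub_sq_eq_sum_norm_sub_centroid_sq_add (a : ι → E) (z : E) :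
    ∑ i, ‖a i - z‖ ^ 2 = ∑ i, ‖a i - (Fintype.card ι : ℝ)⁻¹ • ∑ j, a j‖ ^ 2 +
      Fintype.card ι * ‖(Fintype.card ι : ℝ)⁻¹ • ∑ j, a j - z‖ ^ 2 := by
  set c := (Fintype.card ι : ℝ)⁻¹ • ∑ j, a j
  have hcross : ∑ i, inner ℝ (a i - c) (c - z) = 0 := by
    rw [← sum_inner, sum_sub_smul_sum_eq_zero, inner_zero_left]
  calc ∑ i, ‖a i - z‖ ^ 2
      = ∑ i, (‖a i - c‖ ^ 2 + 2 * inner ℝ (a i - c) (c - z) + ‖c - z‖ ^ 2) := by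
        refine sum_congr rfl fun i _ => ?_
        rw [← norm_add_sq_real, sub_add_sub_cancel]
    _ = _ := by
        rw [sum_add_distrib, sum_add_distrib, ← mul_sum, hcross, sum_const, card_univ,
          nsmul_eq_mul]
        ring

theorem eq_centroid_of_isLocalMinOn_sum_norm_sub_sq [Nonempty ι] {S : Set E} (hS : Convex ℝ S)
    {a : ι → E} {m : E} (hm : m ∈ S) (hc : (Fintype.card ι : ℝ)⁻¹ • ∑ j, a j ∈ S)
    (hmin : IsLocalMinOn (fun z => ∑ i, ‖a i - z‖ ^ 2) S m) :
    m = (Fintype.card ι : ℝ)⁻¹ • ∑ j, a j := by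
  set c := (Fintype.card ι : ℝ)⁻¹ • ∑ j, a j
  have hcard : (0 : ℝ) < Fintype.card ι := by exact_mod_cast Fintype.card_pos
  have hdist : IsLocalMinOn (fun z => dist z c) S m := by
    refine Filter.Eventually.mono hmin fun z hz => ?_
    dsimp only at hz ⊢
    rw [sum_norm_sub_sq_eq_sum_norm_sub_centroid_sq_add a m,
      sum_norm_sub_sq_eq_sum_norm_sub_centroid_sq_add a z, add_le_add_iff_left,
      mul_le_mul_iff_right₀ hcard] at hz
    rw [dist_eq_norm', dist_eq_norm']
    exact (pow_le_pow_iff_left₀ (norm_nonneg _) (norm_nonneg _) two_ne_zero).mp hz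
  simpa using IsMinOn.of_isLocalMinOn_of_convexOn hm hdist (convexOn_dist c hS) hc

end Centroid

section Partition

variable {l m : ℕ}

def flattenEuclidean : Matrix (Fin l) (Fin m) ℝ →ₗ[ℝ] EuclideanSpace ℝ (Fin l × Fin m) where
  toFun A := WithLp.toLp 2 fun p => A p.1 p.2
  map_add' _ _ := rfl
  map_smul' _ _ := rfl

@[simp]
theorem flattenEuclidean_apply (A : Matrix (Fin l) (Fin m) ℝ) (p : Fin l × Fin m) :
    flattenEuclidean A p = A p.1 p.2 :=
  rfl

theorem fnorm_eq_norm_flattenEuclidean (A : Matrix (Fin l) (Fin m) ℝ) :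
    fnorm A = ‖flattenEuclidean A‖ := by
  simp [fnorm, finner, EuclideanSpace.norm_eq, Fintype.sum_prod_type, sq]

theorem convex_LP : Convex ℝ (LP l m) := by
  rintro X ⟨hX01, hXsum⟩ Y ⟨hY01, hYsum⟩ a b ha hb hab
  refine ⟨fun k j => ⟨?_, ?_⟩, fun j => ?_⟩
  · exact add_nonneg (mul_nonneg ha (hX01 k j).1) (mul_nonneg hb (hY01 k j).1)
  · simp only [Matrix.add_apply, Matrix.smul_apply, smul_eq_mul]
    nlinarith [(hX01 k j).2, (hY01 k j).2]
  · simp only [Matrix.add_apply, Matrix.smul_apply, smul_eq_mul, sum_add_distrib, ← mul_sum,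
      hXsum, hYsum, hab, mul_one]

theorem act_mem_LP (σ : Equiv.Perm (Fin l)) {A : Matrix (Fin l) (Fin m) ℝ} (hA : A ∈ LP l m) :
    act σ A ∈ LP l m :=
  ⟨fun _ j => hA.1 _ j, fun j => (hA.2 j) ▸ Fintype.sum_equiv σ⁻¹ _ _ fun _ => rfl⟩

theorem act_one (A : Matrix (Fin l) (Fin m) ℝ) : act 1 A = A :=
  rfl

theorem act_act (σ τ : Equiv.Perm (Fin l)) (A : Matrix (Fin l) (Fin m) ℝ) :
    act σ (act τ A) = act (σ * τ) A :=
  rfl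

theorem act_sub (σ : Equiv.Perm (Fin l)) (A B : Matrix (Fin l) (Fin m) ℝ) :
    act σ (A - B) = act σ A - act σ B :=
  rfl

theorem fnorm_act (σ : Equiv.Perm (Fin l)) (A : Matrix (Fin l) (Fin m) ℝ) :
    fnorm (act σ A) = fnorm A := by
  rw [fnorm, fnorm, finner, finner]
  exact congrArg Real.sqrt (Fintype.sum_equiv σ⁻¹ _ _ fun _ => rfl)

theorem mem_orbit_self (A : Matrix (Fin l) (Fin m) ℝ) : A ∈ orbit A :=
  ⟨1, act_one A⟩

theorem act_mem_orbit (σ : Equiv.Perm (Fin l)) {X A : Matrix (Fin l) (Fin m) ℝ}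
    (hA : A ∈ orbit X) : act σ A ∈ orbit X := by
  obtain ⟨τ, rfl⟩ := hA
  exact ⟨σ * τ, rfl⟩

theorem orbit_subset_LP {X : Matrix (Fin l) (Fin m) ℝ} (hX : X ∈ LP l m) : orbit X ⊆ LP l m := by
  rintro _ ⟨σ, rfl⟩
  exact act_mem_LP σ hX

theorem exists_isMinOn_fnorm_sub_orbit (X M : Matrix (Fin l) (Fin m) ℝ) :
    ∃ A ∈ orbit X, IsMinOn (fun B => fnorm (B - M)) (orbit X) A := by
  simpa only [isMinOn_iff] using (orbit X).exists_min_image (fun B => fnorm (B - M))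
    (Set.finite_range fun σ => act σ X) ⟨X, mem_orbit_self X⟩

theorem pdist_orbit_eq_of_isMinOn {X M A : Matrix (Fin l) (Fin m) ℝ} (hA : A ∈ orbit X)
    (hmin : IsMinOn (fun B => fnorm (B - M)) (orbit X) A) :
    pdist (orbit X) (orbit M) = fnorm (A - M) := by
  refine IsLeast.csInf_eq ⟨⟨A, hA, M, mem_orbit_self M, rfl⟩, ?_⟩
  rintro _ ⟨B, hB, _, ⟨τ, rfl⟩, rfl⟩
  calc fnorm (A - M) ≤ fnorm (act τ⁻¹ B - M) := hmin (act_mem_orbit τ⁻¹ hB)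
    _ = fnorm (B - act τ M) := by
      rw [← fnorm_act τ, act_sub, act_act, mul_inv_cancel, act_one]

theorem sInf_sq_fnorm_sub_orbit_le {X A : Matrix (Fin l) (Fin m) ℝ} (hA : A ∈ orbit X)
    (Z : Matrix (Fin l) (Fin m) ℝ) :
    sInf {r : ℝ | ∃ B ∈ orbit X, r = fnorm (B - Z) ^ 2} ≤ fnorm (A - Z) ^ 2 :=
  csInf_le ⟨0, by rintro _ ⟨B, -, rfl⟩; positivity⟩ ⟨A, hA, rfl⟩

theorem sInf_sq_fnorm_sub_orbit_eq_of_isMinOn {X M A : Matrix (Fin l) (Fin m) ℝ}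
    (hA : A ∈ orbit X) (hmin : IsMinOn (fun B => fnorm (B - M)) (orbit X) A) :
    sInf {r : ℝ | ∃ B ∈ orbit X, r = fnorm (B - M) ^ 2} = fnorm (A - M) ^ 2 := by
  refine IsLeast.csInf_eq ⟨⟨A, hA, rfl⟩, ?_⟩
  rintro _ ⟨B, hB, rfl⟩
  exact pow_le_pow_left₀ (Real.sqrt_nonneg _) (hmin hB) 2

theorem eq_centroid_of_forall_sum_fnorm_sub_sq_le {n : ℕ} (hn : 0 < n)
    {S : Set (Matrix (Fin l) (Fin m) ℝ)} (hS : Convex ℝ S) {A : Fin n → Matrix (Fin l) (Fin m) ℝ}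
    {M : Matrix (Fin l) (Fin m) ℝ} (hM : M ∈ S) (hc : (n : ℝ)⁻¹ • ∑ i, A i ∈ S) {ε : ℝ}
    (hε : 0 < ε) (hmin : ∀ Z ∈ S, fnorm (Z - M) < ε →
      ∑ i, fnorm (A i - M) ^ 2 ≤ ∑ i, fnorm (A i - Z) ^ 2) :
    M = (n : ℝ)⁻¹ • ∑ i, A i := by
  have : Nonempty (Fin n) := ⟨⟨0, hn⟩⟩
  have hflat : flattenEuclidean ((n : ℝ)⁻¹ • ∑ i, A i) =
      (Fintype.card (Fin n) : ℝ)⁻¹ • ∑ i, flattenEuclidean (A i) := by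
    rw [map_smul, map_sum, Fintype.card_fin]
  have hlocal : IsLocalMinOn (fun z => ∑ i, ‖flattenEuclidean (A i) - z‖ ^ 2)
      (flattenEuclidean '' S) (flattenEuclidean M) := by
    refine eventually_nhdsWithin_iff.mpr (Metric.eventually_nhds_iff.mpr ⟨ε, hε, ?_⟩)
    rintro _ hZM ⟨Z, hZ, rfl⟩
    rw [dist_eq_norm, ← map_sub, ← fnorm_eq_norm_flattenEuclidean] at hZM
    simpa only [← map_sub, ← fnorm_eq_norm_flattenEuclidean] using hmin Z hZ hZM
  have := eq_centroid_of_isLocalMinOn_sum_norm_sub_sq (hS.linear_image flattenEuclidean)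
    (Set.mem_image_of_mem _ hM) (hflat ▸ Set.mem_image_of_mem _ hc) hlocal
  ext k j
  simpa [hflat, Matrix.sum_apply] using congrArg (· (k, j)) this

end Partition

theorem mean_partition_theorem (l m n : ℕ) (hn : 0 < n)
    (X : Fin n → Matrix (Fin l) (Fin m) ℝ) (hX : ∀ i, X i ∈ LP l m)
    (M : Matrix (Fin l) (Fin m) ℝ) (hM : M ∈ LP l m)
    (hloc : ∃ ε > (0:ℝ), ∀ Z ∈ LP l m, fnorm (Z - M) < ε →
      (n : ℝ)⁻¹ * ∑ i, sInf {r : ℝ | ∃ A ∈ orbit (X i), r = (fnorm (A - M)) ^ 2} ≤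
      (n : ℝ)⁻¹ * ∑ i, sInf {r : ℝ | ∃ A ∈ orbit (X i), r = (fnorm (A - Z)) ^ 2}) :
    ∃ A : Fin n → Matrix (Fin l) (Fin m) ℝ,
      (∀ i, A i ∈ orbit (X i)) ∧
      (∀ i, fnorm (A i - M) = pdist (orbit (X i)) (orbit M)) ∧
      M = (n : ℝ)⁻¹ • ∑ i, A i := by
  choose A hA hAmin using fun i => exists_isMinOn_fnorm_sub_orbit (X i) M
  refine ⟨A, hA, fun i => (pdist_orbit_eq_of_isMinOn (hA i) (hAmin i)).symm, ?_⟩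
  obtain ⟨ε, hε, hloc⟩ := hloc
  have hcentroid : (n : ℝ)⁻¹ • ∑ i, A i ∈ LP l m := by
    rw [smul_sum]
    refine convex_LP.sum_mem (fun _ _ => by positivity) ?_
      fun i _ => orbit_subset_LP (hX i) (hA i)
    simp [hn.ne']
  refine eq_centroid_of_forall_sum_fnorm_sub_sq_le hn convex_LP hM hcentroid hε ?_
  intro Z hZ hZM
  calc ∑ i, fnorm (A i - M) ^ 2
      = ∑ i, sInf {r : ℝ | ∃ B ∈ orbit (X i), r = fnorm (B - M) ^ 2} := by
        simp only [sInf_sq_fnorm_sub_orbit_eq_of_isMinOn (hA _) (hAmin _)]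
    _ ≤ ∑ i, sInf {r : ℝ | ∃ B ∈ orbit (X i), r = fnorm (B - Z) ^ 2} :=
        le_of_mul_le_mul_left (hloc Z hZ hZM) (by positivity)
    _ ≤ ∑ i, fnorm (A i - Z) ^ 2 := sum_le_sum fun i _ => sInf_sq_fnorm_sub_orbit_le (hA i) Z
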